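/- arXiv:1704.08661 — 8 statements merged into one kernel-verified Lean document; each statement's English description precedes it below -/
import Mathlib

section
/- Let T_n be a string of length n over a finite alphabet, T_i its prefix of length i, and ν(T_i) the number of distinct subsequences of T_i that are not subsequences of T_{i-1}. If the last letter t_n does not occur in T_{n-1}, then ν(T_n) = 1 + Σ_{i=1}^{n-1} ν(T_i). -/
/-- Number of distinct nonempty subsequences of a string. -/
def phi {A : Type*} [DecidableEq A] (T : List A) : ℕ :=
  (T.sublists.toFinset.erase []).card

/-- Number of new distinct subsequences contributed by the last letter. -/
def nu {A : Type*} [DecidableEq A] (T : List A) : ℕ :=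
  phi T - phi T.dropLast

/-! A subsequence of `L ++ [a]` either avoids the new letter `a`, and is then a subsequence of `L`,
or ends in it and is `s ++ [a]` for a subsequence `s` of `L` (possibly empty). Since `a ∉ L` the two
kinds never coincide, so `phi (L ++ [a]) + 1 = 2 * (phi L + 1)` and `nu (L ++ [a]) = phi L + 1`.
On the other hand the `nu` of the prefixes of `L` telescope to `phi L`. -/

section Subsequences

variable {A : Type*} [DecidableEq A]

lemma phi_le_phi_of_sublist {L M : List A} (h : L.Sublist M) : phi L ≤ phi M := by
  apply Finset.card_le_card
  apply Finset.erase_subset_erase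
  intro s hs
  simp only [List.mem_toFinset, List.mem_sublists] at hs ⊢
  exact hs.trans h

lemma phi_add_one (L : List A) : phi L + 1 = L.sublists.toFinset.card :=
  Finset.card_erase_add_one (by simp)

lemma phi_append_singleton {L : List A} {a : A} (ha : a ∉ L) :
    phi (L ++ [a]) + 1 = 2 * (phi L + 1) := by
  set S := L.sublists.toFinset
  have hsplit : (L ++ [a]).sublists.toFinset = S ∪ S.image (· ++ [a]) := by
    ext s
    simp [S, List.sublists_concat]
  have hdisj : Disjoint S (S.image (· ++ [a])) := by
    rw [Finset.disjoint_right]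
    rintro _ hs hs'
    obtain ⟨s, -, rfl⟩ := Finset.mem_image.1 hs
    exact ha ((List.mem_sublists.1 (List.mem_toFinset.1 hs')).subset (by simp))
  have hcard : (S.image (· ++ [a])).card = S.card :=
    Finset.card_image_of_injective _ (List.append_left_injective [a])
  rw [phi_add_one, phi_add_one, hsplit, Finset.card_union_of_disjoint hdisj, hcard]
  ring

lemma nu_append_singleton {L : List A} {a : A} (ha : a ∉ L) : nu (L ++ [a]) = phi L + 1 := by
  have := phi_append_singleton ha
  rw [nu, List.dropLast_concat]
  omega

lemma nu_take_succ {L : List A} {m : ℕ} (hm : m < L.length) :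
    nu (L.take (m + 1)) = phi (L.take (m + 1)) - phi (L.take m) := by
  have hdrop : (L.take (m + 1)).dropLast = L.take m := by
    rw [List.dropLast_eq_take, List.length_take, List.take_take]
    congr 1
    omega
  rw [nu, hdrop]

lemma sum_nu_take {L : List A} {m : ℕ} (hm : m ≤ L.length) :
    ∑ i ∈ Finset.Icc 1 m, nu (L.take i) = phi (L.take m) := by
  induction m with
  | zero => simp [phi]
  | succ m ih =>
    have hmono : phi (L.take m) ≤ phi (L.take (m + 1)) :=
      phi_le_phi_of_sublist (List.take_sublist_take_left (Nat.le_succ m))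
    rw [Finset.sum_Icc_succ_top (by omega), ih (by omega), nu_take_succ (by omega)]
    omega

end Subsequences

theorem stmt_1_general {A : Type*} [DecidableEq A] (T : List A)
    (hne : T ≠ []) (hl : T.getLast hne ∉ T.dropLast) :
    nu T = 1 + ∑ i ∈ Finset.Icc 1 (T.length - 1), nu (T.take i) := by
  have hsum : ∑ i ∈ Finset.Icc 1 (T.length - 1), nu (T.take i) = phi T.dropLast := by
    rw [sum_nu_take (by omega), ← List.dropLast_eq_take]
  rw [hsum, ← List.dropLast_append_getLast hne, nu_append_singleton hl, List.dropLast_append_getLast]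
  omega

theorem stmt_1 {A : Type*} [DecidableEq A] [Fintype A] (T : List A)
    (hne : T ≠ []) (hl : T.getLast hne ∉ T.dropLast) :
    nu T = 1 + ∑ i ∈ Finset.Icc 1 (T.length - 1), nu (T.take i) :=
  stmt_1_general T hne hl
end

section
/- Let T_n be a string of length n over a finite alphabet and let l > 0 be the largest index less than n with t_l = t_n. Then the number of distinct new subsequences of T_n equals Σ_{i=l}^{n-1} ν(T_i), where ν(T_i) is the number of distinct subsequences of the prefix T_i that are not subsequences of T_{i-1}. -/
open List Finset

namespace List

variable {α : Type*} {l l' s X V : List α} {a : α}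

theorem sublist_concat_iff : l <+ l' ++ [a] ↔ l <+ l' ∨ ∃ r, l = r ++ [a] ∧ r <+ l' := by
  rw [← reverse_sublist, reverse_concat, sublist_cons_iff]
  simp only [reverse_sublist, reverse_eq_cons_iff]
  constructor
  · rintro (h | ⟨r, hr, h⟩)
    · exact .inl (by simpa using h)
    · exact .inr ⟨r.reverse, hr, sublist_reverse_iff.1 h⟩
  · rintro (h | ⟨r, rfl, h⟩)
    · exact .inl (by simpa using h)
    · exact .inr ⟨r.reverse, by simp, by simpa using h⟩

theorem concat_sublist_of_sublist_append_of_notMem (ha : a ∉ V) (h : s ++ [a] <+ X ++ V) :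
    s ++ [a] <+ X := by
  induction V using List.reverseRecOn with
  | nil => simpa using h
  | append_singleton V b ih =>
    rw [← append_assoc, sublist_concat_iff] at h
    rcases h with h | ⟨r, hr, -⟩
    · exact ih (fun h' => ha (mem_append_left _ h')) h
    · obtain rfl : a = b := (append_inj' hr rfl).2 |> List.singleton_inj.mp
      simp at ha

theorem concat_sublist_append_cons_iff (ha : a ∉ V) : s ++ [a] <+ X ++ a :: V ↔ s <+ X := by
  rw [← append_sublist_append_right [a] (l₁ := s) (l₂ := X)]
  refine ⟨fun h => concat_sublist_of_sublist_append_of_notMem (X := X ++ [a]) ha (by simpa using h),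
    fun h => h.trans (by simp)⟩

end List

section
variable {α : Type*} [DecidableEq α]

theorem sublists_concat_toFinset_sdiff (P : List α) (a : α) :
    (P ++ [a]).sublists.toFinset \ P.sublists.toFinset =
      ({s ∈ P.sublists.toFinset | ¬ s ++ [a] <+ P}).image (· ++ [a]) := by
  ext s
  simp only [mem_sdiff, mem_image, List.mem_toFinset, mem_sublists, sublist_concat_iff]
  aesop

theorem sublists_toFinset_mono {S T : List α} (h : S <+ T) :
    S.sublists.toFinset ⊆ T.sublists.toFinset := fun s hs => by
  simp only [List.mem_toFinset, mem_sublists] at hs ⊢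
  exact hs.trans h

theorem card_sublists_toFinset (T : List α) : #T.sublists.toFinset = phi T + 1 := by
  rw [phi, card_erase_of_mem (by simp), Nat.sub_add_cancel (card_pos.2 ⟨[], by simp⟩)]

theorem phi_mono {S T : List α} (h : S <+ T) : phi S ≤ phi T :=
  card_le_card (erase_subset_erase _ (sublists_toFinset_mono h))

theorem phi_concat_sub_phi {P Q : List α} {a : α} (hPQ : ∀ s, s ++ [a] <+ P ↔ s <+ Q) :
    phi (P ++ [a]) - phi P = phi P - phi Q := by
  have hQP : Q <+ P := (sublist_append_left Q [a]).trans ((hPQ Q).2 (Sublist.refl Q))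
  have hfilter : {s ∈ P.sublists.toFinset | ¬ s ++ [a] <+ P} =
      P.sublists.toFinset \ Q.sublists.toFinset := by
    ext s; simp [hPQ]
  have hnew := card_sdiff_of_subset (sublists_toFinset_mono (sublist_append_left P [a]))
  rw [sublists_concat_toFinset_sdiff, hfilter, card_image_of_injective _ (append_left_injective [a]),
    card_sdiff_of_subset (sublists_toFinset_mono hQP)] at hnew
  simp only [card_sublists_toFinset] at hnew
  omega

theorem nu_append_cons_concat {Q V : List α} {a : α} (ha : a ∉ V) :
    nu (Q ++ a :: V ++ [a]) = phi (Q ++ a :: V) - phi Q := by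
  rw [nu, dropLast_concat]
  exact phi_concat_sub_phi fun s => concat_sublist_append_cons_iff ha

theorem sum_nu_take_s2 (T : List α) {k m : ℕ} (hkm : k ≤ m) (hm : m ≤ T.length) :
    ∑ i ∈ Ioc k m, nu (T.take i) = phi (T.take m) - phi (T.take k) := by
  induction m, hkm using Nat.le_induction with
  | base => simp
  | succ m hkm ih =>
    have hmono : phi (T.take k) ≤ phi (T.take m) := phi_mono (take_sublist_take_left hkm)
    have hstep : phi (T.take m) ≤ phi (T.take (m + 1)) := phi_mono (take_sublist_take_left m.le_succ)
    have hdrop : (T.take (m + 1)).dropLast = T.take m := by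
      rw [dropLast_eq_take, length_take, take_take]
      congr 1
      omega
    rw [sum_Ioc_succ_top hkm, ih (by omega), nu, hdrop]
    omega

theorem nu_eq_phi_take_sub_phi_take {T : List α} {k m : ℕ} (hkm : k < m) (hm : T.length = m + 1)
    (heq : T[k] = T[m]) (hlast : T[m] ∉ (T.take m).drop (k + 1)) :
    nu T = phi (T.take m) - phi (T.take k) := by
  have hsplit : T.take m = T.take k ++ T[m] :: (T.take m).drop (k + 1) := by
    conv_lhs => rw [← take_append_drop k (T.take m)]
    rw [take_take, min_eq_left hkm.le, drop_eq_getElem_cons (by simp; omega), getElem_take, heq]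
  have hT : T = T.take m ++ [T[m]] := by
    rw [take_concat_get', ← hm, take_length]
  conv_lhs => rw [hT, hsplit]
  rw [nu_append_cons_concat hlast, ← hsplit]

end

theorem stmt_2_general {A : Type*} [DecidableEq A] [Inhabited A]
    (T : List A) (n l : ℕ) (hn : T.length = n)
    (hl : 0 < l) (hln : l < n)
    (heq : T.getD (l - 1) default = T.getD (n - 1) default)
    (hmax : ∀ i, l < i → i < n → T.getD (i - 1) default ≠ T.getD (n - 1) default) :
    nu T = ∑ i ∈ Finset.Icc l (n - 1), nu (T.take i) := by
  obtain ⟨k, rfl⟩ : ∃ k, l = k + 1 := ⟨l - 1, by omega⟩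
  obtain ⟨m, rfl⟩ : ∃ m, n = m + 1 := ⟨n - 1, by omega⟩
  simp only [Nat.add_sub_cancel] at heq hmax ⊢
  rw [Icc_add_one_left_eq_Ioc, sum_nu_take_s2 T (by omega) (by omega)]
  rw [getD_eq_getElem _ _ (by omega), getD_eq_getElem _ _ (by omega)] at heq
  refine nu_eq_phi_take_sub_phi_take (by omega) hn heq fun hmem => ?_
  obtain ⟨j, hj, hja⟩ := mem_iff_getElem.1 hmem
  simp only [length_drop, length_take] at hj
  have hne := hmax (k + 1 + j + 1) (by omega) (by omega)
  rw [Nat.add_sub_cancel, getD_eq_getElem _ _ (by omega), getD_eq_getElem _ _ (by omega)] at hne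
  exact hne (by simpa using hja)

theorem stmt_2 {A : Type*} [DecidableEq A] [Fintype A] [Inhabited A]
    (T : List A) (n l : ℕ) (hn : T.length = n)
    (hl : 0 < l) (hln : l < n)
    (heq : T.getD (l - 1) default = T.getD (n - 1) default)
    (hmax : ∀ i, l < i → i < n → T.getD (i - 1) default ≠ T.getD (n - 1) default) :
    nu T = ∑ i ∈ Finset.Icc l (n - 1), nu (T.take i) :=
  stmt_2_general T n l hn hl hln heq hmax
end

section
/- For any string T of length n ≥ 0 over a finite alphabet and any two distinct letters j ≠ k, the number of new distinct subsequences of the string T·j·k (T with j then k appended) equals ν(T·j) + ν(T·k), where ν(W) denotes the number of distinct subsequences of W that are not subsequences of W with its last letter deleted. -/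
/-!
A subsequence of `W ++ [x]` that is not a subsequence of `W` must end with that final `x`.
Hence the new subsequences of `T ++ [j, k]` are `S ++ [k]` with `S` a subsequence of
`T ++ [j]`, and they split according to whether `S` is a subsequence of `T`: those with
`S <+ T` are exactly the new subsequences of `T ++ [k]` (because `j ≠ k`), and the others are
the new subsequences of `T ++ [j]` with `k` appended.
-/

namespace List

variable {A : Type*}

theorem sublist_concat_iff_s3 {S W : List A} {x : A} :
    S <+ W ++ [x] ↔ S <+ W ∨ ∃ S', S = S' ++ [x] ∧ S' <+ W := by
  constructor
  · intro h
    obtain ⟨S₁, S₂, rfl, h₁, h₂⟩ := sublist_append_iff.1 h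
    rcases sublist_singleton.1 h₂ with rfl | rfl
    · exact Or.inl (by simpa using h₁)
    · exact Or.inr ⟨S₁, rfl, h₁⟩
  · rintro (h | ⟨S', rfl, h⟩)
    · exact h.trans (sublist_append_left _ _)
    · exact (append_sublist_append_right _).2 h

theorem Sublist.of_concat_of_concat_of_ne {S T : List A} {j k : A} (hjk : j ≠ k)
    (hj : S <+ T ++ [j]) (hk : S <+ T ++ [k]) : S <+ T := by
  rcases sublist_concat_iff_s3.1 hj with h | ⟨Sj, rfl, -⟩
  · exact h
  rcases sublist_concat_iff_s3.1 hk with h | ⟨Sk, heq, -⟩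
  · exact h
  exact absurd (by simpa using congrArg getLast? heq) hjk

end List

section

open List Finset

variable {A : Type*} [DecidableEq A]

def nonemptySublists (W : List A) : Finset (List A) :=
  W.sublists.toFinset.erase []

def newSublists (W : List A) (x : A) : Finset (List A) :=
  nonemptySublists (W ++ [x]) \ nonemptySublists W

theorem mem_nonemptySublists {S W : List A} : S ∈ nonemptySublists W ↔ S ≠ [] ∧ S <+ W := by
  simp [nonemptySublists, mem_sublists]

theorem mem_newSublists {S W : List A} {x : A} :
    S ∈ newSublists W x ↔ S <+ W ++ [x] ∧ ¬ S <+ W := by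
  simp only [newSublists, Finset.mem_sdiff, mem_nonemptySublists]
  constructor
  · rintro ⟨⟨hne, h⟩, hW⟩
    exact ⟨h, fun h' => hW ⟨hne, h'⟩⟩
  · rintro ⟨h, hW⟩
    exact ⟨⟨by rintro rfl; exact hW (nil_sublist W), h⟩, fun h' => hW h'.2⟩

theorem nu_concat (W : List A) (x : A) : nu (W ++ [x]) = #(newSublists W x) := by
  have hsub : nonemptySublists W ⊆ nonemptySublists (W ++ [x]) := fun S hS => by
    rw [mem_nonemptySublists] at hS ⊢
    exact ⟨hS.1, hS.2.trans (sublist_append_left _ _)⟩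
  rw [newSublists, card_sdiff_of_subset hsub, nu, dropLast_concat]
  rfl

theorem newSublists_concat_of_ne (T : List A) {j k : A} (hjk : j ≠ k) :
    newSublists (T ++ [j]) k =
      newSublists T k ∪ (newSublists T j).image (· ++ [k]) := by
  ext S
  simp only [Finset.mem_union, Finset.mem_image, mem_newSublists]
  constructor
  · rintro ⟨hS, hSj⟩
    rcases sublist_concat_iff_s3.1 hS with h | ⟨S', rfl, hS'⟩
    · exact absurd h hSj
    by_cases hS'T : S' <+ T
    · exact Or.inl ⟨(append_sublist_append_right _).2 hS'T,
        fun h => hSj (h.trans (sublist_append_left _ _))⟩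
    · exact Or.inr ⟨S', ⟨hS', hS'T⟩, rfl⟩
  · rintro (⟨hSk, hST⟩ | ⟨S', ⟨hS', hS'T⟩, rfl⟩)
    · exact ⟨hSk.trans ((sublist_append_left T [j]).append (Sublist.refl _)),
        fun hSj => hST (hSj.of_concat_of_concat_of_ne hjk hSk)⟩
    · refine ⟨(append_sublist_append_right _).2 hS', fun h => ?_⟩
      rcases sublist_concat_iff_s3.1 h with h | ⟨S'', heq, -⟩
      · exact hS'T ((sublist_append_left S' [k]).trans h)
      · exact hjk (by simpa using (congrArg getLast? heq).symm)

theorem disjoint_newSublists_image_concat (T : List A) (j k : A) :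
    Disjoint (newSublists T k) ((newSublists T j).image (· ++ [k])) := by
  simp only [Finset.disjoint_left, Finset.mem_image, mem_newSublists]
  rintro _ ⟨hSk, hST⟩ ⟨S', ⟨-, hS'T⟩, rfl⟩
  exact hS'T ((append_sublist_append_right _).1 hSk)

end

theorem stmt_3_general {A : Type*} [DecidableEq A]
    (T : List A) (j k : A) (hjk : j ≠ k) :
    nu (T ++ [j, k]) = nu (T ++ [j]) + nu (T ++ [k]) := by
  rw [show T ++ [j, k] = T ++ [j] ++ [k] by simp, nu_concat, nu_concat, nu_concat,
    newSublists_concat_of_ne T hjk,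
    Finset.card_union_of_disjoint (disjoint_newSublists_image_concat T j k),
    Finset.card_image_of_injective _ (List.append_left_injective [k]), add_comm]

theorem stmt_3 {A : Type*} [DecidableEq A] [Fintype A]
    (T : List A) (j k : A) (hjk : j ≠ k) :
    nu (T ++ [j, k]) = nu (T ++ [j]) + nu (T ++ [k]) :=
  stmt_3_general T j k hjk
end

section
/- Let α ∈ (0,1), set q = √(α(1−α)), and define a_1 = α, b_1 = 1−α, a_{i+1} = a_i + α·b_i, b_{i+1} = b_i + (1−α)·a_i. Then for all i ≥ 1, a_i = (1/2)·((α − q)(1 − q)^{i−1} + (α + q)(1 + q)^{i−1}). -/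
/-!
The step `(a, b) ↦ (a + α b, b + β a)` is linear with eigenvalues `1 ± q`, where `q² = αβ`.
Starting from `(α, β)`, twice the iterates are `(α - q, β - q) (1 - q)ⁿ + (α + q, β + q) (1 + q)ⁿ`,
which one checks by induction on `n` using only `q² = αβ`.
-/

theorem two_mul_eq_of_coupled_recurrence {R : Type*} [CommRing R] {α β q : R}
    (hq : q ^ 2 = α * β) {a b : ℕ → R} (ha0 : a 0 = α) (hb0 : b 0 = β)
    (ha : ∀ n, a (n + 1) = a n + α * b n) (hb : ∀ n, b (n + 1) = b n + β * a n) (n : ℕ) :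
    2 * a n = (α - q) * (1 - q) ^ n + (α + q) * (1 + q) ^ n ∧
      2 * b n = (β - q) * (1 - q) ^ n + (β + q) * (1 + q) ^ n := by
  induction n with
  | zero => constructor <;> simp only [ha0, hb0, pow_zero] <;> ring
  | succ n ih =>
    obtain ⟨iha, ihb⟩ := ih
    constructor
    · rw [ha, mul_add, iha, mul_left_comm, ihb]
      linear_combination (-(1 + q) ^ n - (1 - q) ^ n) * hq
    · rw [hb, mul_add, ihb, mul_left_comm, iha]
      linear_combination (-(1 + q) ^ n - (1 - q) ^ n) * hq

theorem stmt_8 (α : ℝ) (hα : α ∈ Set.Ioo (0:ℝ) 1)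
    (q : ℝ) (hq : q = Real.sqrt (α * (1 - α)))
    (a b : ℕ → ℝ)
    (ha1 : a 1 = α) (hb1 : b 1 = 1 - α)
    (ha : ∀ i ≥ 1, a (i + 1) = a i + α * b i)
    (hb : ∀ i ≥ 1, b (i + 1) = b i + (1 - α) * a i) :
    ∀ i ≥ 1, a i = (1 / 2) * ((α - q) * (1 - q) ^ (i - 1) + (α + q) * (1 + q) ^ (i - 1)) := by
  have hq2 : q ^ 2 = α * (1 - α) := by
    rw [hq, Real.sq_sqrt]
    exact mul_nonneg hα.1.le (sub_nonneg.mpr hα.2.le)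
  intro i hi
  obtain ⟨n, rfl⟩ : ∃ n, i = n + 1 := ⟨i - 1, by omega⟩
  have key := (two_mul_eq_of_coupled_recurrence hq2 (a := fun n => a (n + 1))
    (b := fun n => b (n + 1)) ha1 hb1 (fun n => ha (n + 1) (by omega))
    (fun n => hb (n + 1) (by omega)) n).1
  rw [Nat.add_sub_cancel, ← key]
  ring
end

section
/- Let S_n be a random binary string of length n whose letters are i.i.d. with Pr[s_i = 1] = α ∈ (0,1), and let φ(S_n) be the number of distinct nonempty subsequences of S_n. With q = √(α(1−α)), E[φ(S_n)] = [ (1 − 2q)(1 − (1 − q)^n) + (1 + 2q)((1 + q)^n − 1) ] / (2q). -/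
/-!
Split the distinct nonempty subsequences of `T` by their last letter `x`, with count `a_x(T)`.
Appending `x` gives `a_x(Tx) = φ(T) + 1` (every subsequence of `T`, the empty one included,
followed by `x`) and leaves the other counts unchanged. Taking expectations, `P = E a_true` and
`Q = E a_false` obey a linear recurrence, and `S = P + Q + 2`, `W = αQ + (1 - α)P + 1` satisfy
`S' = S + W`, `W' = W + q²S`, a system with eigenvalues `1 ± q`.
-/

open Finset

section Subsequences

variable {A : Type*} [DecidableEq A]

def phiEndingIn (x : A) (T : List A) : ℕ :=
  (T.sublists.toFinset.filter (·.getLast? = some x)).card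

lemma phi_eq_sum_phiEndingIn [Fintype A] (T : List A) : phi T = ∑ x, phiEndingIn x T := by
  have hsplit : T.sublists.toFinset.erase [] =
      univ.biUnion fun x => T.sublists.toFinset.filter (·.getLast? = some x) := by
    ext l
    rcases l.eq_nil_or_concat with rfl | ⟨L, b, rfl⟩ <;> simp
  have hdisj : (Set.univ : Set A).PairwiseDisjoint
      fun x => T.sublists.toFinset.filter (·.getLast? = some x) := by
    intro x _ y _ hxy
    refine disjoint_filter.mpr fun l _ hx hy => hxy ?_
    simpa [hx] using hy
  rw [phi, hsplit, card_biUnion (by simpa using hdisj)]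
  rfl

lemma phiEndingIn_nil (x : A) : phiEndingIn x [] = 0 := by
  simp [phiEndingIn]

lemma sublists_toFinset_concat (T : List A) (x : A) :
    (T ++ [x]).sublists.toFinset =
      T.sublists.toFinset ∪ T.sublists.toFinset.image (· ++ [x]) := by
  ext l
  simp [List.sublists_concat]

lemma phiEndingIn_concat_self (T : List A) (x : A) : phiEndingIn x (T ++ [x]) = phi T + 1 := by
  have hends : (T ++ [x]).sublists.toFinset.filter (·.getLast? = some x) =
      T.sublists.toFinset.image (· ++ [x]) := by
    ext l
    simp only [mem_filter, mem_image, List.mem_toFinset, List.mem_sublists]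
    constructor
    · rintro ⟨hl, hlast⟩
      have hsplit := List.dropLast_append_getLast? x hlast
      rw [← hsplit] at hl
      exact ⟨l.dropLast, (List.append_sublist_append_right [x]).mp hl, hsplit⟩
    · rintro ⟨s, hs, rfl⟩
      exact ⟨hs.append_right [x] |>.trans (by simp), by simp⟩
  rw [phiEndingIn, hends, card_image_of_injective _ (List.append_left_injective [x]),
    ← card_erase_add_one (s := T.sublists.toFinset) (a := []) (by simp), phi]

lemma phiEndingIn_concat_of_ne (T : List A) {x y : A} (h : y ≠ x) :
    phiEndingIn x (T ++ [y]) = phiEndingIn x T := by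
  rw [phiEndingIn, sublists_toFinset_concat, filter_union,
    filter_false_of_mem (s := image _ _) (by simp [h]), union_empty, phiEndingIn]

end Subsequences

section RandomString

def letterProb (α : ℝ) : Bool → ℝ
  | true => α
  | false => 1 - α

def bernoulliWeight (α : ℝ) (L : List Bool) : ℝ :=
  α ^ L.count true * (1 - α) ^ L.count false

lemma bernoulliWeight_concat (α : ℝ) (L : List Bool) (x : Bool) :
    bernoulliWeight α (L ++ [x]) = bernoulliWeight α L * letterProb α x := by
  cases x <;> simp [bernoulliWeight, letterProb, List.count_append, pow_succ] <;> ring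

def stringExpect (α : ℝ) (n : ℕ) (f : List Bool → ℝ) : ℝ :=
  ∑ T : Fin n → Bool, f (List.ofFn T) * bernoulliWeight α (List.ofFn T)

variable {α : ℝ} {n : ℕ}

lemma stringExpect_zero (f : List Bool → ℝ) : stringExpect α 0 f = f [] := by
  simp [stringExpect, bernoulliWeight]

lemma stringExpect_succ (f : List Bool → ℝ) :
    stringExpect α (n + 1) f =
      α * stringExpect α n (fun L => f (L ++ [true]))
        + (1 - α) * stringExpect α n (fun L => f (L ++ [false])) := by
  have hsnoc (x : Bool) (T : Fin n → Bool) :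
      List.ofFn (Fin.snocEquiv (fun _ => Bool) (x, T)) = List.ofFn T ++ [x] := by
    change List.ofFn (Fin.snoc T x) = _
    rw [List.ofFn_succ']
    simp
  rw [stringExpect, ← (Fin.snocEquiv fun _ => Bool).sum_comp, Fintype.sum_prod_type,
    Fintype.sum_bool, stringExpect, stringExpect, mul_sum, mul_sum]
  simp only [hsnoc, bernoulliWeight_concat, letterProb]
  congr 1 <;> refine sum_congr rfl fun T _ => by ring

lemma stringExpect_add (f g : List Bool → ℝ) :
    stringExpect α n (fun L => f L + g L) = stringExpect α n f + stringExpect α n g := by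
  simp only [stringExpect, add_mul, sum_add_distrib]

lemma stringExpect_const (c : ℝ) : stringExpect α n (fun _ => c) = c := by
  induction n with
  | zero => exact stringExpect_zero _
  | succ n ih => rw [stringExpect_succ, ih]; ring

end RandomString

lemma stringExpect_phiEndingIn_succ {α : ℝ} {n : ℕ} (x : Bool) :
    stringExpect α (n + 1) (fun L => phiEndingIn x L) =
      stringExpect α n (fun L => phiEndingIn x L)
        + letterProb α x * (stringExpect α n (fun L => phiEndingIn (!x) L) + 1) := by
  cases x <;>
  simp only [stringExpect_succ, phiEndingIn_concat_self, phi_eq_sum_phiEndingIn,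
    phiEndingIn_concat_of_ne _ (by decide : true ≠ false),
    phiEndingIn_concat_of_ne _ (by decide : false ≠ true), Fintype.sum_bool, Nat.cast_add,
    Nat.cast_one, stringExpect_add, stringExpect_const, letterProb, Bool.not_true,
    Bool.not_false] <;>
  ring

lemma coupled_recurrence_closed_form {R : Type*} [CommRing R] {S W : ℕ → R} {q : R}
    (hS : ∀ n, S (n + 1) = S n + W n) (hW : ∀ n, W (n + 1) = W n + q ^ 2 * S n) (n : ℕ) :
    2 * q * S n = (W 0 + q * S 0) * (1 + q) ^ n - (W 0 - q * S 0) * (1 - q) ^ n := by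
  have hplus (n : ℕ) : W n + q * S n = (W 0 + q * S 0) * (1 + q) ^ n := by
    induction n with
    | zero => simp
    | succ n ih => rw [hS, hW, pow_succ]; linear_combination (1 + q) * ih
  have hminus (n : ℕ) : W n - q * S n = (W 0 - q * S 0) * (1 - q) ^ n := by
    induction n with
    | zero => simp
    | succ n ih => rw [hS, hW, pow_succ]; linear_combination (1 - q) * ih
  linear_combination hplus n - hminus n

theorem stmt_11 (α : ℝ) (hα : α ∈ Set.Ioo (0:ℝ) 1)
    (q : ℝ) (hq : q = Real.sqrt (α * (1 - α))) (n : ℕ) :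
    ∑ T : Fin n → Bool,
        (phi (List.ofFn T) : ℝ) * α ^ ((List.ofFn T).count true)
          * (1 - α) ^ ((List.ofFn T).count false) =
      ((1 - 2 * q) * (1 - (1 - q) ^ n) + (1 + 2 * q) * ((1 + q) ^ n - 1)) / (2 * q) := by
  obtain ⟨hα0, hα1⟩ := hα
  have hvar : 0 < α * (1 - α) := mul_pos hα0 (by linarith)
  have hq0 : 0 < q := hq ▸ Real.sqrt_pos.mpr hvar
  have hq2 : q ^ 2 = α * (1 - α) := hq ▸ Real.sq_sqrt hvar.le
  set P := fun n => stringExpect α n (fun L => phiEndingIn true L)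
  set Q := fun n => stringExpect α n (fun L => phiEndingIn false L)
  have hP (n : ℕ) : P (n + 1) = P n + α * (Q n + 1) := stringExpect_phiEndingIn_succ true
  have hQ (n : ℕ) : Q (n + 1) = Q n + (1 - α) * (P n + 1) := stringExpect_phiEndingIn_succ false
  have hP0 : P 0 = 0 := by simp [P, stringExpect_zero, phiEndingIn_nil]
  have hQ0 : Q 0 = 0 := by simp [Q, stringExpect_zero, phiEndingIn_nil]
  have hclosed := coupled_recurrence_closed_form (S := fun n => P n + Q n + 2)
    (W := fun n => α * Q n + (1 - α) * P n + 1) (q := q)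
    (fun n => by simp only [hP, hQ]; ring) (fun n => by simp only [hP, hQ, hq2]; ring) n
  have hE : ∑ T : Fin n → Bool, (phi (List.ofFn T) : ℝ) * α ^ ((List.ofFn T).count true)
      * (1 - α) ^ ((List.ofFn T).count false) = P n + Q n := by
    simp only [P, Q, ← stringExpect_add, ← Nat.cast_add, phi_eq_sum_phiEndingIn, Fintype.sum_bool]
    simp only [stringExpect, bernoulliWeight, mul_assoc]
  rw [hE, eq_div_iff (by positivity)]
  simp only [hP0, hQ0] at hclosed
  linear_combination hclosed
end

section
/- For random binary strings with i.i.d. letters and Pr[s_i=1] = 1/2, the expected number of distinct nonempty subsequences is E[φ(S_n)] = 2·(3/2)^n − 2. -/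
/-!
Let `g T` count the distinct subsequences of `T`, the empty one included. The subsequences of
`a :: T` are those of `T` together with `a :: s` for `s` a subsequence of `T`, and the two
families overlap exactly in the subsequences of `T` that start with `a`. As `a` ranges over an
alphabet of size `k`, these overlaps partition the nonempty subsequences of `T`, so
`∑ₐ g (a :: T) = (2k - 1) g T + 1`. Summing over all words of length `n` gives
`G (n + 1) = (2k - 1) G n + kⁿ` for `G n = ∑_{|T| = n} g T`, whence
`(k - 1) G n + kⁿ = k (2k - 1)ⁿ`. For `k = 2` this is `G n = 2 · 3ⁿ - 2ⁿ`, and `φ = g - 1`.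
-/

open Finset List

lemma sum_ofFn_eq_sum_cons {α M : Type*} [Fintype α] [AddCommMonoid M] (f : List α → M)
    (n : ℕ) : ∑ T : Fin (n + 1) → α, f (ofFn T) = ∑ a, ∑ T : Fin n → α, f (a :: ofFn T) := by
  rw [← (Fin.consEquiv fun _ => α).sum_comp, Fintype.sum_prod_type]
  simp [Fin.consEquiv, ofFn_succ]

namespace List

variable {α : Type*} [DecidableEq α]

def subseqs (T : List α) : Finset (List α) := T.sublists.toFinset

lemma nil_mem_subseqs (T : List α) : [] ∈ T.subseqs := by
  simp [subseqs]

lemma subseqs_cons (a : α) (T : List α) :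
    (a :: T).subseqs = T.subseqs ∪ T.subseqs.image (cons a) := by
  rw [subseqs, toFinset_eq_of_perm _ _ (sublists_cons_perm_append a T), toFinset_append]
  ext
  simp [subseqs]

lemma subseqs_inter_image_cons (a : α) (T : List α) :
    T.subseqs ∩ T.subseqs.image (cons a) = {s ∈ T.subseqs | s.head? = some a} := by
  ext s
  simp only [subseqs, Finset.mem_inter, Finset.mem_image, Finset.mem_filter, mem_toFinset,
    mem_sublists]
  constructor
  · rintro ⟨hs, r, -, rfl⟩
    exact ⟨hs, rfl⟩
  · rintro ⟨hs, hhead⟩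
    obtain ⟨t, rfl⟩ : ∃ t, s = a :: t := by
      cases s <;> simp_all
    exact ⟨hs, t, (sublist_cons_self a t).trans hs, rfl⟩

lemma card_subseqs_cons_add (a : α) (T : List α) :
    #(a :: T).subseqs + #{s ∈ T.subseqs | s.head? = some a} = 2 * #T.subseqs := by
  rw [subseqs_cons, ← subseqs_inter_image_cons, card_union_add_card_inter,
    card_image_of_injective _ cons_injective, two_mul]

lemma sum_card_subseqs_head_add_one [Fintype α] (T : List α) :
    ∑ a, #{s ∈ T.subseqs | s.head? = some a} + 1 = #T.subseqs := by
  have hnone : {s ∈ T.subseqs | s.head? = none} = {[]} := by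
    ext s
    simp only [Finset.mem_filter, Finset.mem_singleton, head?_eq_none_iff, and_iff_right_iff_imp]
    rintro rfl
    exact T.nil_mem_subseqs
  rw [card_eq_sum_card_fiberwise (f := head?) (t := univ) (fun _ _ => Finset.mem_univ _),
    Fintype.sum_option, hnone, card_singleton, add_comm]

lemma sum_card_subseqs_cons_add [Fintype α] (T : List α) :
    ∑ a, #(a :: T).subseqs + #T.subseqs = 2 * Fintype.card α * #T.subseqs + 1 := by
  have hcons : ∑ a, (#(a :: T).subseqs + #{s ∈ T.subseqs | s.head? = some a})
      = Fintype.card α * (2 * #T.subseqs) := by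
    simp only [card_subseqs_cons_add, sum_const, card_univ, smul_eq_mul]
  rw [sum_add_distrib] at hcons
  have hhead := T.sum_card_subseqs_head_add_one
  linarith

end List

lemma phi_add_one_s12 {α : Type*} [DecidableEq α] (T : List α) : phi T + 1 = #T.subseqs :=
  card_erase_add_one T.nil_mem_subseqs

section TotalSubseqs

variable (α : Type*) [Fintype α] [DecidableEq α]

def totalSubseqs (n : ℕ) : ℕ := ∑ T : Fin n → α, #(ofFn T).subseqs

lemma totalSubseqs_succ_add (n : ℕ) :
    totalSubseqs α (n + 1) + totalSubseqs α n
      = 2 * Fintype.card α * totalSubseqs α n + Fintype.card α ^ n := by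
  rw [totalSubseqs, totalSubseqs, sum_ofFn_eq_sum_cons (fun l => #l.subseqs), sum_comm,
    ← sum_add_distrib]
  simp only [sum_card_subseqs_cons_add, sum_add_distrib, ← mul_sum, sum_const, card_univ,
    Fintype.card_fun, Fintype.card_fin, smul_eq_mul, mul_one]

lemma totalSubseqs_closed_form [Nonempty α] (n : ℕ) :
    (Fintype.card α - 1) * totalSubseqs α n + Fintype.card α ^ n
      = Fintype.card α * (2 * Fintype.card α - 1) ^ n := by
  obtain ⟨m, hm⟩ : ∃ m, Fintype.card α = m + 1 := Nat.exists_eq_add_one.2 Fintype.card_pos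
  induction n with
  | zero => simp [totalSubseqs, subseqs, hm]
  | succ n ih =>
    have hrec := totalSubseqs_succ_add α n
    rw [hm] at ih hrec ⊢
    rw [show 2 * (m + 1) - 1 = 2 * m + 1 by omega] at ih ⊢
    simp only [Nat.add_sub_cancel] at ih ⊢
    rw [pow_succ, pow_succ, ← mul_assoc, ← ih]
    linear_combination m * hrec

lemma sum_phi_ofFn_add_card_pow (n : ℕ) :
    ∑ T : Fin n → α, phi (ofFn T) + Fintype.card α ^ n = totalSubseqs α n := by
  simp only [totalSubseqs, ← phi_add_one_s12, sum_add_distrib, sum_const, card_univ,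
    Fintype.card_fun, Fintype.card_fin, smul_eq_mul, mul_one]

end TotalSubseqs

theorem stmt_12 (n : ℕ) :
    (∑ T : Fin n → Bool, (phi (List.ofFn T) : ℝ)) / 2 ^ n =
      2 * (3 / 2 : ℝ) ^ n - 2 := by
  have hnat : ∑ T : Fin n → Bool, phi (ofFn T) + 2 * 2 ^ n = 2 * 3 ^ n := by
    have hclosed := totalSubseqs_closed_form Bool n
    rw [← sum_phi_ofFn_add_card_pow, Fintype.card_bool] at hclosed
    norm_num at hclosed
    omega
  have hreal : ∑ T : Fin n → Bool, (phi (ofFn T) : ℝ) + 2 * 2 ^ n = 2 * 3 ^ n := by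
    exact_mod_cast hnat
  rw [div_pow]
  field_simp
  linarith
end

section
/- Let ψ(n) = E[φ(S_n)] + 1, where S_n is a random string of n i.i.d. letters from alphabet [d] with Pr[s=j] = α_j, and φ counts distinct nonempty subsequences. Then ψ is submultiplicative: ψ(n+m) ≤ ψ(n)·ψ(m) for all n, m ≥ 1. -/
open Finset

/-! Every subsequence of `S ++ T` splits as a subsequence of `S` followed by one of `T`, so
`1 + φ` is submultiplicative under concatenation. Since the letters are i.i.d., a random string of
length `n + m` is the concatenation of two independent random strings of lengths `n` and `m`, and
`ψ(k)` is the expectation of `1 + φ(S_k)`; taking expectations of the pointwise inequality gives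
`ψ(n + m) ≤ E[(1 + φ(S_n)) (1 + φ(S_m))] = ψ(n) ψ(m)`. -/

lemma card_sublists_toFinset_append_le {A : Type*} [DecidableEq A] (S T : List A) :
    #(S ++ T).sublists.toFinset ≤ #S.sublists.toFinset * #T.sublists.toFinset := by
  rw [← card_product]
  refine card_le_card_of_surjOn (fun p => p.1 ++ p.2) fun x hx => ?_
  simp only [coe_product, List.coe_toFinset, List.mem_sublists, Set.mem_ofPred_eq] at hx ⊢
  obtain ⟨a, b, rfl, ha, hb⟩ := List.sublist_append_iff.mp hx
  exact ⟨(a, b), ⟨ha, hb⟩, rfl⟩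

lemma one_add_phi {A : Type*} [DecidableEq A] (T : List A) :
    1 + phi T = #T.sublists.toFinset := by
  have h : [] ∈ T.sublists.toFinset := by simp
  rw [phi, card_erase_of_mem h]
  have := card_pos.mpr ⟨_, h⟩
  omega

lemma one_add_phi_append_le {A : Type*} [DecidableEq A] (S T : List A) :
    1 + phi (S ++ T) ≤ (1 + phi S) * (1 + phi T) := by
  simpa only [one_add_phi] using card_sublists_toFinset_append_le S T

section Strings

variable {R : Type*} [CommSemiring R]

lemma prod_apply_fin_append {X : Type*} (α : X → R) {n m : ℕ} (S : Fin n → X) (U : Fin m → X) :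
    ∏ i, α (Fin.append S U i) = (∏ i, α (S i)) * ∏ i, α (U i) := by
  simp [Fin.prod_univ_add]

variable {X : Type*} [Fintype X]

lemma sum_prod_apply_eq_one (α : X → R) (hsum : ∑ j, α j = 1) (n : ℕ) :
    ∑ T : Fin n → X, ∏ i, α (T i) = 1 := by
  rw [← Fintype.prod_sum, hsum, prod_const_one]

lemma sum_fun_fin_add (n m : ℕ) (F : (Fin (n + m) → X) → R) :
    ∑ T : Fin (n + m) → X, F T = ∑ S : Fin n → X, ∑ U : Fin m → X, F (Fin.append S U) := by
  rw [← Fintype.sum_prod_type', ← (Fin.appendEquiv n m).sum_comp]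
  rfl

lemma one_add_sum_mul_prod_apply (α : X → R) (hsum : ∑ j, α j = 1) {n : ℕ}
    (f : (Fin n → X) → R) :
    1 + ∑ T, f T * ∏ i, α (T i) = ∑ T, (1 + f T) * ∏ i, α (T i) := by
  simp only [add_mul, one_mul, sum_add_distrib, sum_prod_apply_eq_one α hsum]

end Strings

theorem stmt_15_general (d : ℕ) (α : Fin d → ℝ)
    (hα : ∀ j, 0 ≤ α j) (hsum : ∑ j, α j = 1)
    (ψ : ℕ → ℝ)
    (hψ : ∀ n, ψ n = 1 + ∑ T : Fin n → Fin d,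
        (phi (List.ofFn T) : ℝ) * ∏ i, α (T i)) :
    ∀ n m, 1 ≤ n → 1 ≤ m → ψ (n + m) ≤ ψ n * ψ m := by
  intro n m _ _
  simp only [hψ, one_add_sum_mul_prod_apply α hsum]
  rw [sum_mul_sum, sum_fun_fin_add n m]
  simp only [List.ofFn_fin_append, prod_apply_fin_append]
  refine sum_le_sum fun S _ => sum_le_sum fun U _ => ?_
  rw [mul_mul_mul_comm]
  gcongr
  · exact mul_nonneg (prod_nonneg fun i _ => hα _) (prod_nonneg fun i _ => hα _)
  · exact_mod_cast one_add_phi_append_le _ _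

theorem stmt_15 (d : ℕ) (hd : 0 < d) (α : Fin d → ℝ)
    (hα : ∀ j, 0 ≤ α j) (hsum : ∑ j, α j = 1)
    (ψ : ℕ → ℝ)
    (hψ : ∀ n, ψ n = 1 + ∑ T : Fin n → Fin d,
        (phi (List.ofFn T) : ℝ) * ∏ i, α (T i)) :
    ∀ n m, 1 ≤ n → 1 ≤ m → ψ (n + m) ≤ ψ n * ψ m :=
  stmt_15_general d α hα hsum ψ hψ
end

section
/- Let [d] = {1,...,d} with d ≥ 2, and let s_1,...,s_n be i.i.d. letters with Pr[s_i=j] = α_j where max_j α_j < 1. Then the limit c = lim_n (E[φ(S_n)])^{1/n} satisfies c > 1. -/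
/-!
Cut `S_{2m}` into the `m` blocks `s₁s₂, s₃s₄, …` and keep one letter of each block. Different
choices in the blocks with two distinct letters give different subsequences, so
`φ(S_{2m}) ≥ 2 ^ #{blocks with two distinct letters}`. The blocks are independent, hence the
expectation of the right-hand side is `q ^ m` with `q = E[2^{[s₁ ≠ s₂]}] = 2 - ∑ α_j² > 1`,
and therefore `c ≥ √q > 1`.
-/

open Filter Topology

section PairChoices

variable {A : Type*} [DecidableEq A]

def pairMismatches : List A → ℕ
  | a :: b :: rest => (if a = b then 0 else 1) + pairMismatches rest
  | _ => 0

def pairChoices : List A → Finset (List A)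
  | a :: b :: rest => (pairChoices rest).image (a :: ·) ∪ (pairChoices rest).image (b :: ·)
  | [a] => {[a]}
  | [] => {[]}

lemma sublist_of_mem_pairChoices (T : List A) : ∀ u ∈ pairChoices T, u.Sublist T := by
  induction T using pairChoices.induct with
  | case1 a b rest ih =>
    intro u hu
    simp only [pairChoices, Finset.mem_union, Finset.mem_image] at hu
    rcases hu with ⟨v, hv, rfl⟩ | ⟨v, hv, rfl⟩
    · exact ((ih v hv).cons b).cons_cons a
    · exact ((ih v hv).cons_cons b).cons a
  | case2 a => simp [pairChoices]
  | case3 => simp [pairChoices]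

lemma ne_nil_of_mem_pairChoices {T : List A} (hT : T ≠ []) {u : List A}
    (hu : u ∈ pairChoices T) : u ≠ [] := by
  match T, hT with
  | a :: b :: rest, _ =>
    simp only [pairChoices, Finset.mem_union, Finset.mem_image] at hu
    rcases hu with ⟨v, -, rfl⟩ | ⟨v, -, rfl⟩ <;> exact List.cons_ne_nil _ _
  | [a], _ =>
    rw [pairChoices, Finset.mem_singleton] at hu
    exact hu ▸ List.cons_ne_nil _ _

lemma card_pairChoices (T : List A) : (pairChoices T).card = 2 ^ pairMismatches T := by
  induction T using pairChoices.induct with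
  | case1 a b rest ih =>
    have hinj : ∀ x : A, Function.Injective (x :: · : List A → List A) :=
      fun x => List.cons_injective
    rw [pairChoices, pairMismatches, pow_add]
    by_cases hab : a = b
    · subst hab
      rw [Finset.union_self, Finset.card_image_of_injective _ (hinj a), ih, if_pos rfl]
      simp
    · have hdisj : Disjoint ((pairChoices rest).image (a :: ·))
          ((pairChoices rest).image (b :: ·)) := by
        simp only [Finset.disjoint_left, Finset.mem_image]
        rintro _ ⟨v, -, rfl⟩ ⟨w, -, h⟩
        exact hab (List.cons_eq_cons.mp h).1.symm
      rw [Finset.card_union_of_disjoint hdisj, Finset.card_image_of_injective _ (hinj a),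
        Finset.card_image_of_injective _ (hinj b), ih, if_neg hab]
      ring
  | case2 a => simp [pairChoices, pairMismatches]
  | case3 => simp [pairChoices, pairMismatches]

lemma two_pow_pairMismatches_le_phi {T : List A} (hT : T ≠ []) :
    2 ^ pairMismatches T ≤ phi T := by
  rw [← card_pairChoices, phi]
  refine Finset.card_le_card fun u hu => ?_
  rw [Finset.mem_erase, List.mem_toFinset, List.mem_sublists]
  exact ⟨ne_nil_of_mem_pairChoices hT hu, sublist_of_mem_pairChoices T u hu⟩

end PairChoices

section PairFactor

variable {ι : Type*} [Fintype ι]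

lemma sum_fin_succ_pi {M : Type*} [AddCommMonoid M] {n : ℕ} (F : (Fin (n + 1) → ι) → M) :
    ∑ T, F T = ∑ a, ∑ f : Fin n → ι, F (Fin.cons a f) := by
  rw [← (Fin.consEquiv fun _ => ι).sum_comp F, Fintype.sum_prod_type]
  rfl

lemma sum_sq_lt_one {α : ι → ℝ} (hα : ∀ j, 0 ≤ α j) (hsum : ∑ j, α j = 1)
    (hmax : ∀ j, α j < 1) : ∑ j, α j ^ 2 < 1 := by
  obtain ⟨j₀, -, hj₀⟩ : ∃ j ∈ Finset.univ, 0 < α j := by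
    by_contra! h
    have := Finset.sum_nonpos h
    linarith
  rw [← hsum]
  refine Finset.sum_lt_sum (fun j _ => ?_) ⟨j₀, Finset.mem_univ _, ?_⟩
  · nlinarith [hα j, hmax j]
  · nlinarith [hmax j₀]

variable [DecidableEq ι]

/-- `E[2 ^ [s₁ ≠ s₂]]` for two independent letters with law `α`. -/
def pairFactor (α : ι → ℝ) : ℝ :=
  ∑ a, ∑ b, (2 : ℝ) ^ (if a = b then 0 else 1) * (α a * α b)

lemma sum_two_pow_pairMismatches_mul_prod (α : ι → ℝ) (m : ℕ) :
    ∑ T : Fin (2 * m) → ι, (2 : ℝ) ^ pairMismatches (List.ofFn T) * ∏ i, α (T i) =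
      pairFactor α ^ m := by
  induction m with
  | zero => simp [pairMismatches]
  | succ m ih =>
    rw [pow_succ', ← ih, pairFactor, Finset.sum_mul, show 2 * (m + 1) = 2 * m + 1 + 1 by ring,
      sum_fin_succ_pi]
    refine Finset.sum_congr rfl fun a _ => ?_
    rw [sum_fin_succ_pi, Finset.sum_mul]
    refine Finset.sum_congr rfl fun b _ => ?_
    rw [Finset.mul_sum]
    refine Finset.sum_congr rfl fun T _ => ?_
    simp only [List.ofFn_cons, pairMismatches, pow_add, Fin.prod_univ_succ, Fin.cons_zero,
      Fin.cons_succ]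
    ring

lemma pairFactor_pow_le_sum_phi_mul_prod {α : ι → ℝ} (hα : ∀ j, 0 ≤ α j) {m : ℕ} (hm : m ≠ 0) :
    pairFactor α ^ m ≤ ∑ T : Fin (2 * m) → ι, (phi (List.ofFn T) : ℝ) * ∏ i, α (T i) := by
  rw [← sum_two_pow_pairMismatches_mul_prod]
  refine Finset.sum_le_sum fun T _ => ?_
  have hT : List.ofFn T ≠ [] := by
    rw [Ne, List.ofFn_eq_nil_iff]
    omega
  gcongr
  · exact Finset.prod_nonneg fun i _ => hα _
  · exact_mod_cast two_pow_pairMismatches_le_phi hT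

lemma pairFactor_eq (α : ι → ℝ) : pairFactor α = 2 * (∑ a, α a) ^ 2 - ∑ a, α a ^ 2 := by
  have hterm : ∀ a b, (2 : ℝ) ^ (if a = b then 0 else 1) * (α a * α b) =
      2 * (α a * α b) - if a = b then α a ^ 2 else 0 := by
    intro a b
    split_ifs with hab
    · subst hab; ring
    · ring
  simp only [pairFactor, hterm, Finset.sum_sub_distrib, Finset.sum_ite_eq, Finset.mem_univ,
    if_true, ← Finset.mul_sum, sq, Finset.sum_mul_sum]

lemma one_lt_pairFactor {α : ι → ℝ} (hα : ∀ j, 0 ≤ α j) (hsum : ∑ j, α j = 1)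
    (hmax : ∀ j, α j < 1) : 1 < pairFactor α := by
  rw [pairFactor_eq, hsum]
  linarith [sum_sq_lt_one hα hsum hmax]

end PairFactor

lemma rpow_one_div_le_of_tendsto {ψ : ℕ → ℝ} {c q : ℝ} {k : ℕ} (hk : k ≠ 0) (hq : 0 ≤ q)
    (hψ : Tendsto (fun n : ℕ => ψ n ^ ((1 : ℝ) / n)) atTop (𝓝 c))
    (hle : ∀ m ≠ 0, q ^ m ≤ ψ (k * m)) : q ^ ((1 : ℝ) / k) ≤ c := by
  have hsub : Tendsto (fun m : ℕ => ψ (k * m) ^ ((1 : ℝ) / (k * m : ℕ))) atTop (𝓝 c) :=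
    hψ.comp (tendsto_id.const_mul_atTop' (Nat.pos_of_ne_zero hk))
  refine ge_of_tendsto hsub ((eventually_ne_atTop 0).mono fun m hm => ?_)
  calc q ^ ((1 : ℝ) / k) = (q ^ m) ^ ((1 : ℝ) / (k * m : ℕ)) := by
        rw [← Real.rpow_natCast_mul hq]
        congr 1
        push_cast
        field_simp
    _ ≤ ψ (k * m) ^ ((1 : ℝ) / (k * m : ℕ)) := by
        gcongr
        exact hle m hm

theorem stmt_18_general (d : ℕ) (α : Fin d → ℝ)
    (hα : ∀ j, 0 ≤ α j) (hsum : ∑ j, α j = 1) (hmax : ∀ j, α j < 1)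
    (ψ : ℕ → ℝ)
    (hψ : ∀ n, ψ n = ∑ T : Fin n → Fin d,
        (phi (List.ofFn T) : ℝ) * ∏ i, α (T i))
    (c : ℝ)
    (hc : Filter.Tendsto (fun n : ℕ => ψ n ^ ((1 : ℝ) / n)) Filter.atTop (nhds c)) :
    1 < c := by
  have hq : 1 < pairFactor α := one_lt_pairFactor hα hsum hmax
  have hle : pairFactor α ^ ((1 : ℝ) / 2) ≤ c :=
    rpow_one_div_le_of_tendsto two_ne_zero (by linarith) hc fun m hm =>
      (hψ (2 * m)).symm ▸ pairFactor_pow_le_sum_phi_mul_prod hα hm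
  exact (Real.one_lt_rpow hq one_half_pos).trans_le hle

theorem stmt_18 (d : ℕ) (hd : 2 ≤ d) (α : Fin d → ℝ)
    (hα : ∀ j, 0 ≤ α j) (hsum : ∑ j, α j = 1) (hmax : ∀ j, α j < 1)
    (ψ : ℕ → ℝ)
    (hψ : ∀ n, ψ n = ∑ T : Fin n → Fin d,
        (phi (List.ofFn T) : ℝ) * ∏ i, α (T i))
    (c : ℝ)
    (hc : Filter.Tendsto (fun n : ℕ => ψ n ^ ((1 : ℝ) / n)) Filter.atTop (nhds c)) :
    1 < c :=
  stmt_18_general d α hα hsum hmax ψ hψ c hc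
end
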